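/- Let X be a compact metric space and f : X → X continuous. If f has the average shadowing property, then f has the weak asymptotic average shadowing property. -/

import Mathlib

open Filter Metric

open scoped Classical in
noncomputable def upperDens (A : Set ℕ) : ℝ :=
  Filter.limsup (fun n => (((Finset.range n).filter (· ∈ A)).card : ℝ) / n) Filter.atTop

open scoped Classical in
noncomputable def lowerDens (A : Set ℕ) : ℝ :=
  Filter.liminf (fun n => (((Finset.range n).filter (· ∈ A)).card : ℝ) / n) Filter.atTop

open scoped Classical in
def DensityZero (A : Set ℕ) : Prop :=
  Filter.Tendsto (fun n => (((Finset.range n).filter (· ∈ A)).card : ℝ) / n)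
    Filter.atTop (nhds 0)

noncomputable def cesaro (a : ℕ → ℝ) (n : ℕ) : ℝ := (∑ i ∈ Finset.range n, a i) / n

variable {X : Type*} [MetricSpace X]

def ErgodicPO (f : X → X) (δ : ℝ) (x : ℕ → X) : Prop :=
  DensityZero {j | δ ≤ dist (f (x j)) (x (j + 1))}

def AvgPO (f : X → X) (δ : ℝ) (x : ℕ → X) : Prop :=
  ∃ N : ℕ, 0 < N ∧ ∀ n ≥ N, ∀ k : ℕ,
    (∑ j ∈ Finset.range n, dist (f (x (j + k))) (x (j + k + 1))) / n < δ

def WeakAsympAvgPO (f : X → X) (δ : ℝ) (x : ℕ → X) : Prop :=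
  Filter.limsup (cesaro (fun j => dist (f (x j)) (x (j + 1)))) Filter.atTop < δ

def AsympAvgPO (f : X → X) (x : ℕ → X) : Prop :=
  Filter.Tendsto (cesaro (fun j => dist (f (x j)) (x (j + 1)))) Filter.atTop (nhds 0)

def ShadowAvg (f : X → X) (ε : ℝ) (z : X) (x : ℕ → X) : Prop :=
  Filter.limsup (cesaro (fun j => dist (f^[j] z) (x j))) Filter.atTop < ε

def MeanErgodicShadowing (f : X → X) : Prop :=
  ∀ ε > (0:ℝ), ∃ δ > (0:ℝ), ∀ x : ℕ → X, ErgodicPO f δ x → ∃ z, ShadowAvg f ε z x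

def AvgShadowing (f : X → X) : Prop :=
  ∀ ε > (0:ℝ), ∃ δ > (0:ℝ), ∀ x : ℕ → X, AvgPO f δ x → ∃ z, ShadowAvg f ε z x

def WeakAsympAvgShadowing (f : X → X) : Prop :=
  ∀ ε > (0:ℝ), ∀ x : ℕ → X, AsympAvgPO f x → ∃ z, ShadowAvg f ε z x

def AlmostAsympAvgShadowing (f : X → X) : Prop :=
  ∀ ε > (0:ℝ), ∃ δ > (0:ℝ), ∀ x : ℕ → X, WeakAsympAvgPO f δ x → ∃ z, ShadowAvg f ε z x

def AsympAvgShadowing (f : X → X) : Prop :=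
  ∀ x : ℕ → X, AsympAvgPO f x →
    ∃ z, Filter.Tendsto (cesaro (fun j => dist (f^[j] z) (x j))) Filter.atTop (nhds 0)

def MalphaShadowing (f : X → X) (α : ℝ) : Prop :=
  ∀ ε > (0:ℝ), ∃ δ > (0:ℝ), ∀ x : ℕ → X, ErgodicPO f δ x →
    ∃ z, α < lowerDens {j | dist (f^[j] z) (x j) < ε}

lemma cesaro_mono {u v : ℕ → ℝ} (h : ∀ j, u j ≤ v j) (n : ℕ) : cesaro u n ≤ cesaro v n := by
  unfold cesaro
  gcongr with i hi
  exact h i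

lemma cesaro_nonneg {u : ℕ → ℝ} (h : ∀ j, 0 ≤ u j) (n : ℕ) : 0 ≤ cesaro u n :=
  div_nonneg (Finset.sum_nonneg fun j _ => h j) (Nat.cast_nonneg n)

lemma cesaro_le_const {u : ℕ → ℝ} {M : ℝ} (hM : 0 ≤ M) (h : ∀ j, u j ≤ M) (n : ℕ) :
    cesaro u n ≤ M := by
  unfold cesaro
  rcases Nat.eq_zero_or_pos n with hn | hn
  · simp [hn, hM]
  · rw [div_le_iff₀ (by exact_mod_cast hn)]
    calc ∑ i ∈ Finset.range n, u i ≤ ∑ _i ∈ Finset.range n, M := Finset.sum_le_sum fun j _ => h j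
    _ = M * n := by simp [mul_comm]

lemma cesaro_add (u v : ℕ → ℝ) (n : ℕ) :
    cesaro (fun j => u j + v j) n = cesaro u n + cesaro v n := by
  unfold cesaro
  rw [Finset.sum_add_distrib, add_div]

lemma orbit_approx {X : Type*} [MetricSpace X] [CompactSpace X] (f : X → X) (hf : Continuous f) :
    ∀ (L : ℕ) (ε : ℝ), 0 < ε → ∃ η > 0, ∀ u : ℕ → X,
      (∀ j < L, dist (f (u j)) (u (j+1)) < η) → ∀ m ≤ L, dist (f^[m] (u 0)) (u m) < ε := by
  intro L
  induction L with
  | zero => intro ε hε; exact ⟨ε, hε, fun u _ m hm => by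
      interval_cases m; simpa using hε⟩
  | succ L ih =>
    intro ε hε
    obtain ⟨θ, hθ, hθ'⟩ := Metric.uniformContinuous_iff.mp
      (CompactSpace.uniformContinuous_of_continuous hf) (ε/2) (half_pos hε)
    obtain ⟨η, hη, hη'⟩ := ih (min θ (ε/2)) (lt_min hθ (half_pos hε))
    refine ⟨min η (ε/2), lt_min hη (half_pos hε), fun u hu m hm => ?_⟩
    have hu' : ∀ j < L, dist (f (u j)) (u (j+1)) < η :=
      fun j hj => (hu j (Nat.lt_succ_of_lt hj)).trans_le (min_le_left _ _)
    rcases eq_or_lt_of_le hm with rfl | hm'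
    · have h1 : dist (f^[L] (u 0)) (u L) < θ :=
        (hη' u hu' L le_rfl).trans_le (min_le_left _ _)
      calc dist (f^[L+1] (u 0)) (u (L+1))
          ≤ dist (f^[L+1] (u 0)) (f (u L)) + dist (f (u L)) (u (L+1)) := dist_triangle _ _ _
        _ < ε/2 + ε/2 := by
            apply add_lt_add
            · rw [Function.iterate_succ_apply']
              exact hθ' h1
            · exact (hu L (Nat.lt_succ_self L)).trans_le (min_le_right _ _)
        _ = ε := add_halves ε
    · exact (hη' u hu' m (Nat.lt_succ_iff.mp hm')).trans_le
        ((min_le_right _ _).trans (half_le_self hε.le))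

lemma sum_ite_mult_le (M : ℝ) (hM : 0 ≤ M) (L : ℕ) (hL : 0 < L) (k : ℕ) :
    ∀ q, ∑ j ∈ Finset.range (L*q), (if (j+k+1) % L = 0 then M else 0) ≤ q * M := by
  intro q
  induction q with
  | zero => simp
  | succ q ih =>
    have hr : L * (q+1) = L*q + L := by ring
    rw [hr, Finset.sum_range_add]
    have hcard : ((Finset.range L).filter (fun m => (L*q + m + k + 1) % L = 0)).card ≤ 1 := by
      apply Finset.card_le_one.mpr
      intro m1 hm1 m2 hm2
      simp only [Finset.mem_filter, Finset.mem_range] at hm1 hm2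
      have d1 := Nat.dvd_of_mod_eq_zero hm1.2
      have d2 := Nat.dvd_of_mod_eq_zero hm2.2
      rcases le_total m1 m2 with hle | hle
      · have : L ∣ (L*q + m2 + k + 1) - (L*q + m1 + k + 1) := Nat.dvd_sub d2 d1
        have h0 : (L*q + m2 + k + 1) - (L*q + m1 + k + 1) = m2 - m1 := by omega
        rw [h0] at this
        have h1 : m2 - m1 = 0 := Nat.eq_zero_of_dvd_of_lt this (by omega)
        omega
      · have : L ∣ (L*q + m1 + k + 1) - (L*q + m2 + k + 1) := Nat.dvd_sub d1 d2
        have h0 : (L*q + m1 + k + 1) - (L*q + m2 + k + 1) = m1 - m2 := by omega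
        rw [h0] at this
        have h1 : m1 - m2 = 0 := Nat.eq_zero_of_dvd_of_lt this (by omega)
        omega
    have hsec : ∑ m ∈ Finset.range L, (if (L*q + m + k + 1) % L = 0 then M else 0) ≤ M := by
      rw [← Finset.sum_filter]
      rw [Finset.sum_const]
      calc (_ : ℝ) ≤ 1 • M := by
            apply smul_le_smul_of_nonneg_right _ hM
            exact_mod_cast hcard
        _ = M := one_smul _ _
    calc _ ≤ q * M + M := by
          apply add_le_add ih
          refine le_trans (le_of_eq ?_) hsec
          apply Finset.sum_congr rfl
          intro m _
          congr 1
        _ = (q+1 : ℕ) * M := by push_cast; ring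

lemma sum_blocks (a : ℕ → ℝ) (L : ℕ) :
    ∀ q, ∑ i ∈ Finset.range q, ∑ m ∈ Finset.range L, a (L*i + m) = ∑ t ∈ Finset.range (L*q), a t := by
  intro q
  induction q with
  | zero => simp
  | succ q ih =>
    have hr : L * (q+1) = L*q + L := by ring
    rw [Finset.sum_range_succ, hr, Finset.sum_range_add, ih]

lemma sum_div_blocks (g : ℕ → ℝ) (L : ℕ) (hL : 0 < L) :
    ∀ q, ∑ j ∈ Finset.range (L*q), g (j / L) = L * ∑ i ∈ Finset.range q, g i := by
  intro q
  induction q with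
  | zero => simp
  | succ q ih =>
    have hr : L * (q+1) = L*q + L := by ring
    rw [Finset.sum_range_succ, hr, Finset.sum_range_add, ih]
    have : ∀ m ∈ Finset.range L, g ((L*q + m)/L) = g q := by
      intro m hm
      congr 1
      rw [Nat.mul_add_div hL, Nat.div_eq_of_lt (Finset.mem_range.mp hm), add_zero]
    rw [Finset.sum_congr rfl this, Finset.sum_const, Finset.card_range]
    push_cast
    ring

lemma mod_step {L j : ℕ} (hL : 0 < L) (h : (j+1) % L ≠ 0) :
    (j+1)/L = j/L ∧ (j+1)%L = j%L + 1 := by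
  have h1 : j % L < L := Nat.mod_lt _ hL
  have h2 : L * (j/L) + j % L = j := Nat.div_add_mod j L
  rcases Nat.lt_or_ge (j % L + 1) L with hlt | hge
  · have he : j + 1 = L * (j/L) + (j % L + 1) := by omega
    constructor
    · rw [he, Nat.mul_add_div hL, Nat.div_eq_of_lt hlt, add_zero]
    · rw [he, Nat.mul_add_mod, Nat.mod_eq_of_lt hlt]
  · exfalso
    have he : j + 1 = L * (j/L + 1) := by
      have : j % L + 1 = L := by omega
      ring_nf
      omega
    apply h
    rw [he, Nat.mul_mod_right]

theorem stmt12' {X : Type*} [MetricSpace X] [CompactSpace X] (f : X → X)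
    (hf : Continuous f)
    (h : ∀ ε > (0:ℝ), ∃ δ > (0:ℝ), ∀ x : ℕ → X,
      (∃ N : ℕ, 0 < N ∧ ∀ n ≥ N, ∀ k : ℕ,
        (∑ j ∈ Finset.range n, dist (f (x (j + k))) (x (j + k + 1))) / n < δ) →
      ∃ z, Filter.limsup (cesaro (fun j => dist (f^[j] z) (x j))) Filter.atTop < ε) :
    ∀ ε > (0:ℝ), ∀ x : ℕ → X,
      Filter.Tendsto (cesaro (fun j => dist (f (x j)) (x (j + 1)))) Filter.atTop (nhds 0) →
      ∃ z, Filter.limsup (cesaro (fun j => dist (f^[j] z) (x j))) Filter.atTop < ε := by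
  intro ε hε x hx
  obtain ⟨M, hM⟩ : ∃ M : ℝ, ∀ p q : X, dist p q ≤ M := by
    obtain ⟨C, hC⟩ := Metric.isBounded_iff.mp (isCompact_univ (X := X)).isBounded
    exact ⟨C, fun p q => hC (Set.mem_univ p) (Set.mem_univ q)⟩
  have hM0 : 0 ≤ M := le_trans dist_nonneg (hM (x 0) (x 0))
  set ε4 := ε / 4 with hε4def
  have hε4pos : 0 < ε4 := by positivity
  obtain ⟨δ, hδpos, hδ⟩ := h ε4 hε4pos
  obtain ⟨L, hL, hLM⟩ : ∃ L : ℕ, 0 < L ∧ M / L < δ / 2 := by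
    refine ⟨Nat.ceil (2 * M / δ) + 1, Nat.succ_pos _, ?_⟩
    set L := Nat.ceil (2 * M / δ) + 1 with hLdef
    have hLpos : (0:ℝ) < L := by exact_mod_cast Nat.succ_pos (Nat.ceil (2 * M / δ))
    have h1 : (2 * M / δ : ℝ) < L := by
      calc (2 * M / δ : ℝ) ≤ Nat.ceil (2 * M / δ) := Nat.le_ceil _
        _ < L := by exact_mod_cast Nat.lt_succ_self _
    rw [div_lt_iff₀ hδpos] at h1
    rw [div_lt_iff₀ hLpos]
    nlinarith
  have hLpos : (0:ℝ) < L := by exact_mod_cast hL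
  obtain ⟨η, hηpos, horb⟩ := orbit_approx f hf L ε4 hε4pos
  set a : ℕ → ℝ := fun j => dist (f (x j)) (x (j + 1)) with hadef
  set y : ℕ → X := fun j => f^[j % L] (x (L * (j / L))) with hydef
  have hstep : ∀ j, (j + 1) % L ≠ 0 → y (j + 1) = f (y j) := by
    intro j hj
    obtain ⟨hd, hm⟩ := mod_step hL hj
    simp only [hydef]
    rw [hd, hm, Function.iterate_succ_apply']
  -- y is a δ-average pseudo orbit
  have hAvg : ∃ N : ℕ, 0 < N ∧ ∀ n ≥ N, ∀ k : ℕ,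
      (∑ j ∈ Finset.range n, dist (f (y (j + k))) (y (j + k + 1))) / n < δ := by
    refine ⟨L, hL, fun n hn k => ?_⟩
    have hnpos : 0 < n := lt_of_lt_of_le hL hn
    have hnpos' : (0:ℝ) < n := by exact_mod_cast hnpos
    have hterm : ∀ j ∈ Finset.range n,
        dist (f (y (j + k))) (y (j + k + 1)) ≤ if (j + k + 1) % L = 0 then M else 0 := by
      intro j _
      by_cases hc : (j + k + 1) % L = 0
      · rw [if_pos hc]; exact hM _ _
      · rw [if_neg hc, hstep (j + k) hc]; simp
    have hsub : n ≤ L * (n / L + 1) := by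
      have h1 := Nat.div_add_mod n L
      have h2 := Nat.mod_lt n hL
      have h3 : L * (n / L + 1) = L * (n / L) + L := by ring
      omega
    have hsum : (∑ j ∈ Finset.range n, dist (f (y (j + k))) (y (j + k + 1)))
        ≤ ((n / L + 1 : ℕ) : ℝ) * M := by
      calc (∑ j ∈ Finset.range n, dist (f (y (j + k))) (y (j + k + 1)))
          ≤ ∑ j ∈ Finset.range n, (if (j + k + 1) % L = 0 then M else 0) :=
            Finset.sum_le_sum hterm
        _ ≤ ∑ j ∈ Finset.range (L * (n / L + 1)), (if (j + k + 1) % L = 0 then M else 0) := by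
            apply Finset.sum_le_sum_of_subset_of_nonneg (Finset.range_subset_range.mpr hsub)
            intro j _ _
            split_ifs
            · exact hM0
            · exact le_refl 0
        _ ≤ ((n / L + 1 : ℕ) : ℝ) * M := sum_ite_mult_le M hM0 L hL k (n / L + 1)
    rw [div_lt_iff₀ hnpos']
    have hcast : ((n / L : ℕ) : ℝ) ≤ (n : ℝ) / L := Nat.cast_div_le
    have hnL : (L : ℝ) ≤ (n : ℝ) := by exact_mod_cast hn
    have k1 : (n : ℝ) / L * M < δ / 2 * n := by
      have : (n : ℝ) / L * M = M / L * n := by ring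
      rw [this]
      exact mul_lt_mul_of_pos_right hLM hnpos'
    have k2 : M < δ / 2 * n := by
      have hM' : M = M / L * L := by field_simp
      calc M = M / L * L := hM'
        _ < δ / 2 * L := mul_lt_mul_of_pos_right hLM hLpos
        _ ≤ δ / 2 * n := by
            apply mul_le_mul_of_nonneg_left hnL (by positivity)
    calc (∑ j ∈ Finset.range n, dist (f (y (j + k))) (y (j + k + 1)))
        ≤ ((n / L + 1 : ℕ) : ℝ) * M := hsum
      _ ≤ ((n : ℝ) / L + 1) * M := by
          apply mul_le_mul_of_nonneg_right _ hM0
          push_cast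
          linarith [hcast]
      _ = (n : ℝ) / L * M + M := by ring
      _ < δ / 2 * n + δ / 2 * n := add_lt_add k1 k2
      _ = δ * n := by ring
  obtain ⟨z, hz⟩ := hδ y hAvg
  refine ⟨z, ?_⟩
  -- block sums
  set g : ℕ → ℝ := fun i => ∑ m ∈ Finset.range L, a (L * i + m) with hgdef
  have hg0 : ∀ i, 0 ≤ g i := fun i => Finset.sum_nonneg fun m _ => dist_nonneg
  have ha0 : ∀ t, 0 ≤ a t := fun t => dist_nonneg
  -- pointwise bound
  have hpoint : ∀ j, dist (y j) (x j) ≤ ε4 + M / η * g (j / L) := by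
    intro j
    have hjmod : L * (j / L) + j % L = j := Nat.div_add_mod j L
    by_cases hbad : ∀ m < L, a (L * (j / L) + m) < η
    · have hu : ∀ m < L, dist (f (x (L * (j / L) + m))) (x (L * (j / L) + m + 1)) < η := by
        intro m hm
        exact hbad m hm
      have := horb (fun m => x (L * (j / L) + m))
        (fun m hm => by simpa [Nat.add_assoc] using hu m hm) (j % L) (Nat.mod_lt j hL).le
      simp only [Nat.add_zero] at this
      rw [hjmod] at this
      have hyx : dist (y j) (x j) < ε4 := this
      have : 0 ≤ M / η * g (j / L) := by positivity
      linarith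
    · push_neg at hbad
      obtain ⟨m, hm, hηm⟩ := hbad
      have h1 : η ≤ g (j / L) :=
        le_trans hηm (Finset.single_le_sum (fun i _ => ha0 _) (Finset.mem_range.mpr hm))
      have h2 : M ≤ M / η * g (j / L) := by
        calc M = M / η * η := by field_simp
          _ ≤ M / η * g (j / L) := by
              apply mul_le_mul_of_nonneg_left h1 (by positivity)
      calc dist (y j) (x j) ≤ M := hM _ _
        _ ≤ ε4 + M / η * g (j / L) := by linarith
  -- the remainder term
  set r : ℕ → ℝ := fun n => M / η * L * (cesaro a (n + L) * (((n : ℝ) + L) / n)) with hrdef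
  have hces : ∀ n : ℕ, 1 ≤ n → cesaro (fun j => dist (y j) (x j)) n ≤ ε4 + r n := by
    intro n hn
    have hnpos' : (0:ℝ) < n := by exact_mod_cast hn
    have step1 : cesaro (fun j => dist (y j) (x j)) n
        ≤ cesaro (fun j => ε4 + M / η * g (j / L)) n := cesaro_mono hpoint n
    have step2 : cesaro (fun j => ε4 + M / η * g (j / L)) n
        = ε4 + M / η * ((∑ j ∈ Finset.range n, g (j / L)) / n) := by
      unfold cesaro
      rw [Finset.sum_add_distrib, Finset.sum_const, Finset.card_range, add_div, ← Finset.mul_sum,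
        mul_div_assoc]
      congr 1
      field_simp
      rw [nsmul_eq_mul]
    set q := n / L + 1 with hqdef
    have hnq : n ≤ L * q := by
      have h1 := Nat.div_add_mod n L
      have h2 := Nat.mod_lt n hL
      have h3 : L * q = L * (n / L) + L := by rw [hqdef]; ring
      omega
    have hqn : L * q ≤ n + L := by
      have h1 := Nat.div_add_mod n L
      have h3 : L * q = L * (n / L) + L := by rw [hqdef]; ring
      omega
    have step3 : ∑ j ∈ Finset.range n, g (j / L) ≤ L * ∑ t ∈ Finset.range (n + L), a t := by
      calc ∑ j ∈ Finset.range n, g (j / L)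
          ≤ ∑ j ∈ Finset.range (L * q), g (j / L) :=
            Finset.sum_le_sum_of_subset_of_nonneg (Finset.range_subset_range.mpr hnq)
              (fun j _ _ => hg0 _)
        _ = L * ∑ i ∈ Finset.range q, g i := sum_div_blocks g L hL q
        _ = L * ∑ t ∈ Finset.range (L * q), a t := by rw [hgdef]; rw [sum_blocks a L q]
        _ ≤ L * ∑ t ∈ Finset.range (n + L), a t := by
            apply mul_le_mul_of_nonneg_left _ (Nat.cast_nonneg L)
            exact Finset.sum_le_sum_of_subset_of_nonneg (Finset.range_subset_range.mpr hqn)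
              (fun t _ _ => ha0 _)
    have step4 : M / η * ((∑ j ∈ Finset.range n, g (j / L)) / n) ≤ r n := by
      have hS : (L : ℝ) * ∑ t ∈ Finset.range (n + L), a t
          = L * (cesaro a (n + L) * ((n : ℝ) + L)) := by
        unfold cesaro
        have : ((n : ℝ) + L) ≠ 0 := by positivity
        push_cast
        field_simp
      simp only [hrdef]
      have : M / η * L * (cesaro a (n + L) * (((n : ℝ) + L) / n))
          = M / η * ((L * (cesaro a (n + L) * ((n : ℝ) + L))) / n) := by ring
      rw [this, ← hS]
      apply mul_le_mul_of_nonneg_left _ (by positivity)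
      have hmul := mul_le_mul_of_nonneg_right step3
        (by positivity : (0:ℝ) ≤ ((n:ℝ))⁻¹)
      simpa [div_eq_mul_inv] using hmul
    calc cesaro (fun j => dist (y j) (x j)) n
        ≤ cesaro (fun j => ε4 + M / η * g (j / L)) n := step1
      _ = ε4 + M / η * ((∑ j ∈ Finset.range n, g (j / L)) / n) := step2
      _ ≤ ε4 + r n := by linarith [step4]
  -- r tends to 0
  have t1 : Filter.Tendsto (fun n => cesaro a (n + L)) atTop (nhds 0) := by
    have := hx.comp (tendsto_add_atTop_nat L)
    exact this
  have t2 : Filter.Tendsto (fun n : ℕ => ((n : ℝ) + L) / n) atTop (nhds 1) := by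
    have base : Filter.Tendsto (fun n : ℕ => 1 + (L : ℝ) / n) atTop (nhds (1 + 0)) :=
      tendsto_const_nhds.add (tendsto_const_div_atTop_nhds_zero_nat (L : ℝ))
    rw [add_zero] at base
    apply base.congr'
    filter_upwards [Filter.eventually_ge_atTop 1] with n hn
    have hnpos' : (0:ℝ) < n := by exact_mod_cast hn
    field_simp
  have tr : Filter.Tendsto r atTop (nhds 0) := by
    have h1 : Filter.Tendsto (fun n => cesaro a (n + L) * (((n : ℝ) + L) / n)) atTop
        (nhds (0 * 1)) := t1.mul t2
    rw [zero_mul] at h1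
    have h2 := h1.const_mul (M / η * L)
    rw [mul_zero] at h2
    exact h2
  -- limsup of cesaro dist(y, x) ≤ ε4
  have hto : Filter.Tendsto (fun n => ε4 + r n) atTop (nhds ε4) := by
    have h1 : Filter.Tendsto (fun _ : ℕ => ε4) atTop (nhds ε4) := tendsto_const_nhds
    have h2 := h1.add tr
    rw [add_zero] at h2
    exact h2
  have hlim_yx : Filter.limsup (cesaro (fun j => dist (y j) (x j))) atTop ≤ ε4 := by
    have hev : cesaro (fun j => dist (y j) (x j)) ≤ᶠ[atTop] fun n => ε4 + r n := by
      filter_upwards [Filter.eventually_ge_atTop 1] with n hn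
      exact hces n hn
    calc Filter.limsup (cesaro (fun j => dist (y j) (x j))) atTop
        ≤ Filter.limsup (fun n => ε4 + r n) atTop :=
          Filter.limsup_le_limsup hev
            (Filter.isCoboundedUnder_le_of_le atTop
              (fun n => cesaro_nonneg (fun j => dist_nonneg) n))
            hto.isBoundedUnder_le
      _ = ε4 := hto.limsup_eq
  -- finish
  have hc1_bdd_le : Filter.IsBoundedUnder (· ≤ ·) atTop
      (cesaro (fun j => dist (f^[j] z) (y j))) :=
    ⟨M, Filter.eventually_map.mpr (Filter.Eventually.of_forall fun n =>
      cesaro_le_const hM0 (fun j => hM _ _) n)⟩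
  have hc1_bdd_ge : Filter.IsBoundedUnder (· ≥ ·) atTop
      (cesaro (fun j => dist (f^[j] z) (y j))) :=
    ⟨0, Filter.eventually_map.mpr (Filter.Eventually.of_forall fun n =>
      cesaro_nonneg (fun j => dist_nonneg) n)⟩
  have hc2_bdd_le : Filter.IsBoundedUnder (· ≤ ·) atTop
      (cesaro (fun j => dist (y j) (x j))) :=
    ⟨M, Filter.eventually_map.mpr (Filter.Eventually.of_forall fun n =>
      cesaro_le_const hM0 (fun j => hM _ _) n)⟩
  have hc2_cobdd : Filter.IsCoboundedUnder (· ≤ ·) atTop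
      (cesaro (fun j => dist (y j) (x j))) :=
    Filter.isCoboundedUnder_le_of_le atTop (fun n => cesaro_nonneg (fun j => dist_nonneg) n)
  have htri : ∀ n, cesaro (fun j => dist (f^[j] z) (x j)) n
      ≤ (cesaro (fun j => dist (f^[j] z) (y j)) + cesaro (fun j => dist (y j) (x j))) n := by
    intro n
    rw [Pi.add_apply, ← cesaro_add]
    exact cesaro_mono (fun j => dist_triangle _ _ _) n
  calc Filter.limsup (cesaro (fun j => dist (f^[j] z) (x j))) atTop
      ≤ Filter.limsup (cesaro (fun j => dist (f^[j] z) (y j))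
          + cesaro (fun j => dist (y j) (x j))) atTop :=
        Filter.limsup_le_limsup (Filter.Eventually.of_forall htri)
          (Filter.isCoboundedUnder_le_of_le atTop
            (fun n => cesaro_nonneg (fun j => dist_nonneg) n))
          (Filter.isBoundedUnder_le_add hc1_bdd_le hc2_bdd_le)
    _ ≤ Filter.limsup (cesaro (fun j => dist (f^[j] z) (y j))) atTop
        + Filter.limsup (cesaro (fun j => dist (y j) (x j))) atTop :=
        limsup_add_le hc1_bdd_ge hc1_bdd_le hc2_cobdd hc2_bdd_le
    _ < ε4 + ε4 := add_lt_add_of_lt_of_le hz hlim_yx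
    _ < ε := by rw [hε4def]; linarith

theorem stmt12 {X : Type*} [MetricSpace X] [CompactSpace X] (f : X → X)
    (hf : Continuous f) (h : AvgShadowing f) : WeakAsympAvgShadowing f := by
  intro ε hε x hx
  exact stmt12' f hf h ε hε x hx
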